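/- Let G be a finite connected simple graph and x, y two distinct vertices. If κ_LLY(x,y) > 0, then d(x,y) ≤ ⌊2/κ_LLY(x,y)⌋. -/

import Mathlib

open Finset

/-- A probability measure on a finite set, given as a density. -/
def IsProbMeasure {V : Type*} [Fintype V] (m : V → ℝ) : Prop :=
  (∀ x, 0 ≤ m x) ∧ ∑ x, m x = 1

/-- A coupling between two probability measures on a finite set. -/
def IsCoupling {V : Type*} [Fintype V] (A : V × V → ℝ) (m₁ m₂ : V → ℝ) : Prop :=
  (∀ p, 0 ≤ A p) ∧ (∀ x, ∑ y, A (x, y) = m₁ x) ∧ (∀ y, ∑ x, A (x, y) = m₂ y)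

/-- The Wasserstein-1 (transportation) distance between two probability measures on a
finite set, with respect to a cost `d`. -/
noncomputable def W {V : Type*} [Fintype V] (d : V → V → ℝ) (m₁ m₂ : V → ℝ) : ℝ :=
  sInf {c | ∃ A, IsCoupling A m₁ m₂ ∧ c = ∑ p : V × V, A p * d p.1 p.2}

lemma W_symm {V : Type*} [Fintype V] (d : V → V → ℝ) (hd : ∀ x y, d x y = d y x)
    (m₁ m₂ : V → ℝ) : W d m₁ m₂ = W d m₂ m₁ := by
  have key : ∀ m₁ m₂ : V → ℝ,
      {c | ∃ A, IsCoupling A m₁ m₂ ∧ c = ∑ p : V × V, A p * d p.1 p.2} ⊆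
      {c | ∃ A, IsCoupling A m₂ m₁ ∧ c = ∑ p : V × V, A p * d p.1 p.2} := by
    rintro m₁ m₂ c ⟨A, ⟨h0, h1, h2⟩, rfl⟩
    refine ⟨fun p => A (p.2, p.1), ⟨fun p => h0 _, fun x => h2 x, fun y => h1 y⟩, ?_⟩
    refine Fintype.sum_equiv (Equiv.prodComm V V) _ _ ?_
    intro p
    simp [Equiv.prodComm, hd p.1 p.2]
  unfold W
  congr 1
  exact Set.Subset.antisymm (key m₁ m₂) (key m₂ m₁)

/-- The `α`-lazy random walk measure at a vertex `x` of a graph. -/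
noncomputable def lazyWalk {V : Type*} [Fintype V] [DecidableEq V] (G : SimpleGraph V)
    [DecidableRel G.Adj] (α : ℝ) (x : V) : V → ℝ :=
  fun v => if v = x then α else if G.Adj x v then (1 - α) / (G.degree x) else 0

/-- The `α`-Ricci curvature `κ_α(x,y) = 1 - W(m_x^α, m_y^α)/d(x,y)`. -/
noncomputable def kappaAlpha {V : Type*} [Fintype V] [DecidableEq V] (G : SimpleGraph V)
    [DecidableRel G.Adj] (α : ℝ) (x y : V) : ℝ :=
  1 - W (fun a b => (G.dist a b : ℝ)) (lazyWalk G α x) (lazyWalk G α y) / (G.dist x y)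

lemma kappaAlpha_symm {V : Type*} [Fintype V] [DecidableEq V] (G : SimpleGraph V)
    [DecidableRel G.Adj] (α : ℝ) (x y : V) :
    kappaAlpha G α x y = kappaAlpha G α y x := by
  unfold kappaAlpha
  rw [W_symm _ (fun a b => by rw [SimpleGraph.dist_comm]),
    SimpleGraph.dist_comm]

/-- The Lin–Lu–Yau Ricci curvature `κ_LLY(x,y) = lim_{α → 1⁻} κ_α(x,y)/(1-α)`. -/
noncomputable def kappaLLY {V : Type*} [Fintype V] [DecidableEq V] (G : SimpleGraph V)
    [DecidableRel G.Adj] (x y : V) : ℝ :=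
  Filter.limUnder (nhdsWithin 1 (Set.Ico (0:ℝ) 1)) (fun α => kappaAlpha G α x y / (1 - α))

lemma kappaLLY_symm {V : Type*} [Fintype V] [DecidableEq V] (G : SimpleGraph V)
    [DecidableRel G.Adj] (x y : V) : kappaLLY G x y = kappaLLY G y x := by
  unfold kappaLLY
  congr 1
  funext α
  rw [kappaAlpha_symm]

/-- Integral `α`-Ricci curvature `I^α_{κ₀}`: total amount of `α`-Ricci curvature below the
threshold `(1-α)κ₀`, summed over the edges of `G`. -/
noncomputable def IAlpha {V : Type*} [Fintype V] [DecidableEq V] (G : SimpleGraph V)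
    [DecidableRel G.Adj] (α κ₀ : ℝ) : ℝ :=
  ∑ e ∈ G.edgeFinset,
    Sym2.lift ⟨fun x y => max 0 ((1 - α) * κ₀ - kappaAlpha G α x y),
      fun x y => by simp only []; rw [kappaAlpha_symm]⟩ e

/-- Integral Lin–Lu–Yau Ricci curvature `I_{κ₀}`: total amount of Lin–Lu–Yau Ricci curvature
below the threshold `κ₀`, summed over the edges of `G`. -/
noncomputable def ILLY {V : Type*} [Fintype V] [DecidableEq V] (G : SimpleGraph V)
    [DecidableRel G.Adj] (κ₀ : ℝ) : ℝ :=
  ∑ e ∈ G.edgeFinset,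
    Sym2.lift ⟨fun x y => max 0 (κ₀ - kappaLLY G x y),
      fun x y => by simp only []; rw [kappaLLY_symm]⟩ e

/-- The diameter of a finite graph. -/
noncomputable def gDiam {V : Type*} [Fintype V] (G : SimpleGraph V) : ℕ :=
  Finset.univ.sup fun p : V × V => G.dist p.1 p.2


/-!
Testing the transport cost against the 1-Lipschitz function `dist · y` gives
`W(m_x^α, m_y^α) ≥ d(x,y) - 2(1-α)`, i.e. `κ_α(x,y)/(1-α) ≤ 2/d(x,y)`. Since `m_x^α` is a
mixture of the Dirac mass at `x` and `m_x^{α'}` for `α' ≤ α`, convexity of `W` makes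
`κ_α/(1-α)` monotone in `α`, so the limit defining `κ_LLY` exists and inherits the bound.
-/

open Filter Topology

theorem limUnder_nhdsWithin_Ico_le_of_monotoneOn {β : Type*} [ConditionallyCompleteLinearOrder β]
    [TopologicalSpace β] [OrderTopology β] {g : ℝ → β} {a b : ℝ} {B : β} (hab : a < b)
    (hg : MonotoneOn g (Set.Ico a b)) (hB : ∀ t ∈ Set.Ico a b, g t ≤ B) :
    limUnder (𝓝[Set.Ico a b] b) g ≤ B := by
  have hB' : ∀ t ∈ Set.Ioo a b, g t ≤ B := fun t ht => hB t (Set.Ioo_subset_Ico_self ht)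
  have hne : (Set.Ioo a b).Nonempty := Set.nonempty_Ioo.mpr hab
  have hlim := (hg.mono Set.Ioo_subset_Ico_self).tendsto_nhdsWithin_Ioo_left hne
    ⟨B, Set.forall_mem_image.mpr hB'⟩
  rw [nhdsWithin_Ico_eq_nhdsLT hab, hlim.limUnder_eq]
  exact csSup_le (hne.image g) (Set.forall_mem_image.mpr hB')

section Transport

variable {V : Type*} [Fintype V] {d : V → V → ℝ} {m₁ m₂ n₁ n₂ : V → ℝ} {A B : V × V → ℝ}

theorem IsProbMeasure.isCoupling_prod (h₁ : IsProbMeasure m₁) (h₂ : IsProbMeasure m₂) :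
    IsCoupling (fun p => m₁ p.1 * m₂ p.2) m₁ m₂ :=
  ⟨fun p => mul_nonneg (h₁.1 _) (h₂.1 _),
    fun x => by simp only [← mul_sum, h₂.2, mul_one],
    fun y => by simp only [← sum_mul, h₁.2, one_mul]⟩

theorem isCoupling_single [DecidableEq V] (x y : V) :
    IsCoupling (Pi.single (x, y) (1 : ℝ)) (Pi.single x 1) (Pi.single y 1) := by
  refine ⟨fun p => ?_, fun a => ?_, fun b => ?_⟩
  · by_cases h : p = (x, y) <;> simp [h]
  · by_cases h : a = x <;> simp [Pi.single_apply, h]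
  · by_cases h : b = y <;> simp [Pi.single_apply, h]

theorem sum_single_mul_cost [DecidableEq V] (x y : V) :
    ∑ p : V × V, (Pi.single (x, y) 1 : V × V → ℝ) p * d p.1 p.2 = d x y := by
  simp [Pi.single_apply, ite_mul]

theorem IsCoupling.convexComb (hA : IsCoupling A m₁ m₂) (hB : IsCoupling B n₁ n₂) {t : ℝ}
    (ht0 : 0 ≤ t) (ht1 : t ≤ 1) :
    IsCoupling (t • A + (1 - t) • B) (t • m₁ + (1 - t) • n₁) (t • m₂ + (1 - t) • n₂) := by
  refine ⟨fun p => ?_, fun x => ?_, fun y => ?_⟩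
  · simp only [Pi.add_apply, Pi.smul_apply, smul_eq_mul]
    exact add_nonneg (mul_nonneg ht0 (hA.1 p)) (mul_nonneg (by linarith) (hB.1 p))
  · simp only [Pi.add_apply, Pi.smul_apply, smul_eq_mul, sum_add_distrib, ← mul_sum,
      hA.2.1, hB.2.1]
  · simp only [Pi.add_apply, Pi.smul_apply, smul_eq_mul, sum_add_distrib, ← mul_sum,
      hA.2.2, hB.2.2]

theorem IsCoupling.sum_mul_fst (hA : IsCoupling A m₁ m₂) (f : V → ℝ) :
    ∑ p : V × V, A p * f p.1 = ∑ v, m₁ v * f v := by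
  simp only [Fintype.sum_prod_type, ← sum_mul, hA.2.1]

theorem IsCoupling.sum_mul_snd (hA : IsCoupling A m₁ m₂) (f : V → ℝ) :
    ∑ p : V × V, A p * f p.2 = ∑ v, m₂ v * f v := by
  simp only [Fintype.sum_prod_type_right, ← sum_mul, hA.2.2]

theorem W_le_cost (hd : ∀ a b, 0 ≤ d a b) (hA : IsCoupling A m₁ m₂) :
    W d m₁ m₂ ≤ ∑ p : V × V, A p * d p.1 p.2 := by
  refine csInf_le ⟨0, ?_⟩ ⟨A, hA, rfl⟩
  rintro c ⟨B, hB, rfl⟩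
  exact sum_nonneg fun p _ => mul_nonneg (hB.1 p) (hd _ _)

theorem le_W (hne : ∃ A, IsCoupling A m₁ m₂) {b : ℝ}
    (hb : ∀ A, IsCoupling A m₁ m₂ → b ≤ ∑ p : V × V, A p * d p.1 p.2) : b ≤ W d m₁ m₂ := by
  obtain ⟨A, hA⟩ := hne
  refine le_csInf ⟨_, A, hA, rfl⟩ ?_
  rintro c ⟨A, hA, rfl⟩
  exact hb A hA

theorem sum_mul_sub_sum_mul_le_W {f : V → ℝ} (hf : ∀ a b, f a - f b ≤ d a b)
    (hne : ∃ A, IsCoupling A m₁ m₂) :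
    ∑ v, m₁ v * f v - ∑ v, m₂ v * f v ≤ W d m₁ m₂ := by
  refine le_W hne fun A hA => ?_
  rw [← hA.sum_mul_fst, ← hA.sum_mul_snd, ← sum_sub_distrib]
  gcongr with p
  rw [← mul_sub]
  exact mul_le_mul_of_nonneg_left (hf _ _) (hA.1 p)

theorem W_convexComb_le (hd : ∀ a b, 0 ≤ d a b) (hA : IsCoupling A m₁ m₂)
    (hne : ∃ B, IsCoupling B n₁ n₂) {t : ℝ} (ht0 : 0 ≤ t) (ht1 : t < 1) :
    W d (t • m₁ + (1 - t) • n₁) (t • m₂ + (1 - t) • n₂)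
      ≤ t * ∑ p : V × V, A p * d p.1 p.2 + (1 - t) * W d n₁ n₂ := by
  have h1t : 0 < 1 - t := by linarith
  have key : (W d (t • m₁ + (1 - t) • n₁) (t • m₂ + (1 - t) • n₂)
      - t * ∑ p : V × V, A p * d p.1 p.2) / (1 - t) ≤ W d n₁ n₂ := by
    refine le_W hne fun B hB => ?_
    rw [div_le_iff₀ h1t, sub_le_iff_le_add]
    refine (W_le_cost hd (hA.convexComb hB ht0 ht1.le)).trans_eq ?_
    simp only [Pi.add_apply, Pi.smul_apply, smul_eq_mul, add_mul, sum_add_distrib, mul_assoc,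
      ← mul_sum]
    ring
  rw [div_le_iff₀ h1t] at key
  linarith

end Transport

section LazyWalk

variable {V : Type*} [Fintype V] [DecidableEq V] (G : SimpleGraph V) [DecidableRel G.Adj]

theorem sum_lazyWalk_mul (α : ℝ) (x : V) (f : V → ℝ) :
    ∑ v, lazyWalk G α x v * f v
      = α * f x + (1 - α) / G.degree x * ∑ v ∈ G.neighborFinset x, f v := by
  have hsplit : ∀ v, lazyWalk G α x v * f v = (if v = x then α * f v else 0)
      + if G.Adj x v then (1 - α) / G.degree x * f v else 0 := fun v => by
    by_cases hv : v = x
    · subst hv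
      simp [lazyWalk]
    · simp [lazyWalk, hv]
  simp only [hsplit, sum_add_distrib, sum_ite_eq', mem_univ, if_true, ← sum_filter,
    ← SimpleGraph.neighborFinset_eq_filter, mul_sum]

theorem lazyWalk_isProbMeasure {α : ℝ} (h0 : 0 ≤ α) (h1 : α ≤ 1) {x : V}
    (hx : 0 < G.degree x) : IsProbMeasure (lazyWalk G α x) := by
  refine ⟨fun v => ?_, ?_⟩
  · unfold lazyWalk
    split_ifs
    exacts [h0, div_nonneg (by linarith) (by positivity), le_rfl]
  · have h := sum_lazyWalk_mul G α x 1
    simp only [Pi.one_apply, mul_one, sum_const, SimpleGraph.card_neighborFinset_eq_degree,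
      nsmul_eq_mul] at h
    rw [h]
    field_simp
    ring

theorem lazyWalk_mixture (t α : ℝ) (x : V) :
    lazyWalk G (t + (1 - t) * α) x = t • Pi.single x 1 + (1 - t) • lazyWalk G α x := by
  funext v
  by_cases hv : v = x
  · subst hv
    simp [lazyWalk]
  · by_cases hadj : G.Adj x v <;> simp [lazyWalk, hv, hadj]
    rw [← mul_div_assoc]
    ring

end LazyWalk

section Curvature

variable {V : Type*} [Fintype V] [DecidableEq V] {G : SimpleGraph V} [DecidableRel G.Adj]

theorem sub_le_W_lazyWalk (hG : G.Connected) {x y : V} (hxy : x ≠ y) {α : ℝ} (h0 : 0 ≤ α)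
    (h1 : α ≤ 1) :
    G.dist x y - 2 * (1 - α)
      ≤ W (fun a b => (G.dist a b : ℝ)) (lazyWalk G α x) (lazyWalk G α y) := by
  have hx : 0 < G.degree x := (hG.preconnected x y).degree_pos_left hxy
  have hy : 0 < G.degree y := (hG.preconnected x y).degree_pos_right hxy
  have hx_nbr : ∀ v ∈ G.neighborFinset x, (G.dist x y : ℝ) - 1 ≤ G.dist v y := fun v hv => by
    have h : G.dist x y ≤ G.dist x v + G.dist v y := hG.dist_triangle
    rw [SimpleGraph.dist_eq_one_iff_adj.mpr ((G.mem_neighborFinset x v).mp hv)] at h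
    linarith [(by exact_mod_cast h : (G.dist x y : ℝ) ≤ 1 + G.dist v y)]
  have hy_nbr : ∀ v ∈ G.neighborFinset y, (G.dist v y : ℝ) = 1 := fun v hv => by
    rw [SimpleGraph.dist_eq_one_iff_adj.mpr ((G.mem_neighborFinset y v).mp hv).symm, Nat.cast_one]
  have hsum_x : G.dist x y - (1 - α) ≤ ∑ v, lazyWalk G α x v * G.dist v y := by
    have h := card_nsmul_le_sum _ _ _ hx_nbr
    rw [SimpleGraph.card_neighborFinset_eq_degree, nsmul_eq_mul] at h
    rw [sum_lazyWalk_mul]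
    calc (G.dist x y : ℝ) - (1 - α) = α * G.dist x y + (1 - α) / G.degree x
          * (G.degree x * (G.dist x y - 1)) := by
          field_simp
          ring
      _ ≤ _ := by gcongr
  have hsum_y : ∑ v, lazyWalk G α y v * G.dist v y = 1 - α := by
    rw [sum_lazyWalk_mul, sum_congr rfl hy_nbr, sum_const, SimpleGraph.card_neighborFinset_eq_degree,
      nsmul_eq_mul, mul_one, SimpleGraph.dist_self, Nat.cast_zero, mul_zero, zero_add]
    field_simp
  have hlip : ∀ a b, (G.dist a y : ℝ) - G.dist b y ≤ G.dist a b := fun a b => by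
    have h : G.dist a y ≤ G.dist a b + G.dist b y := hG.dist_triangle
    linarith [(by exact_mod_cast h : (G.dist a y : ℝ) ≤ G.dist a b + G.dist b y)]
  have hW := sum_mul_sub_sum_mul_le_W hlip
    ⟨_, (lazyWalk_isProbMeasure G h0 h1 hx).isCoupling_prod (lazyWalk_isProbMeasure G h0 h1 hy)⟩
  linarith

theorem kappaAlpha_div_le (hG : G.Connected) {x y : V} (hxy : x ≠ y) {α : ℝ} (h0 : 0 ≤ α)
    (h1 : α < 1) : kappaAlpha G α x y / (1 - α) ≤ 2 / G.dist x y := by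
  have hd : (0 : ℝ) < G.dist x y := by exact_mod_cast hG.pos_dist_of_ne hxy
  have hW := sub_le_W_lazyWalk hG hxy h0 h1.le
  rw [kappaAlpha, div_le_div_iff₀ (by linarith) hd, sub_mul, div_mul_cancel₀ _ hd.ne']
  linarith

theorem mul_kappaAlpha_le_kappaAlpha_mixture (hG : G.Connected) {x y : V} (hxy : x ≠ y)
    {α t : ℝ} (h0 : 0 ≤ α) (h1 : α ≤ 1) (ht0 : 0 ≤ t) (ht1 : t < 1) :
    (1 - t) * kappaAlpha G α x y ≤ kappaAlpha G (t + (1 - t) * α) x y := by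
  have hd : (0 : ℝ) < G.dist x y := by exact_mod_cast hG.pos_dist_of_ne hxy
  have hx := lazyWalk_isProbMeasure G h0 h1 ((hG.preconnected x y).degree_pos_left hxy)
  have hy := lazyWalk_isProbMeasure G h0 h1 ((hG.preconnected x y).degree_pos_right hxy)
  have hW := W_convexComb_le (fun a b => Nat.cast_nonneg (G.dist a b)) (isCoupling_single x y)
    ⟨_, hx.isCoupling_prod hy⟩ ht0 ht1
  simp only [sum_single_mul_cost (d := fun a b => (G.dist a b : ℝ)), ← lazyWalk_mixture] at hW
  simp only [kappaAlpha]
  field_simp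
  linarith

theorem monotoneOn_kappaAlpha_div (hG : G.Connected) {x y : V} (hxy : x ≠ y) :
    MonotoneOn (fun α => kappaAlpha G α x y / (1 - α)) (Set.Ico 0 1) := by
  rintro α' ⟨h0', h1'⟩ α ⟨h0, h1⟩ hle
  have h1α' : 0 < 1 - α' := by linarith
  set t := (α - α') / (1 - α')
  have ht : t * (1 - α') = α - α' := div_mul_cancel₀ _ h1α'.ne'
  have h1t : (1 - t) * (1 - α') = 1 - α := by linarith
  have ht1 : t < 1 := by nlinarith
  have key := mul_kappaAlpha_le_kappaAlpha_mixture hG hxy h0' h1'.le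
    (div_nonneg (by linarith) h1α'.le) ht1
  rw [show t + (1 - t) * α' = α by linarith] at key
  rw [div_le_div_iff₀ h1α' (by linarith)]
  calc kappaAlpha G α' x y * (1 - α) = (1 - t) * kappaAlpha G α' x y * (1 - α') := by
        rw [← h1t]; ring
    _ ≤ kappaAlpha G α x y * (1 - α') := by gcongr

theorem kappaLLY_le (hG : G.Connected) {x y : V} (hxy : x ≠ y) :
    kappaLLY G x y ≤ 2 / G.dist x y :=
  limUnder_nhdsWithin_Ico_le_of_monotoneOn zero_lt_one (monotoneOn_kappaAlpha_div hG hxy)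
    fun _ hα => kappaAlpha_div_le hG hxy hα.1 hα.2

end Curvature

/-- Local Bonnet–Myers estimate: if `κ_LLY(x,y) > 0` then `d(x,y) ≤ ⌊2/κ_LLY(x,y)⌋`. -/
theorem stmt_8 {V : Type*} [Fintype V] [DecidableEq V] (G : SimpleGraph V)
    [DecidableRel G.Adj] (hG : G.Connected) (x y : V) (hxy : x ≠ y)
    (hpos : 0 < kappaLLY G x y) :
    (G.dist x y : ℤ) ≤ ⌊2 / kappaLLY G x y⌋ := by
  have hd : (0 : ℝ) < G.dist x y := by exact_mod_cast hG.pos_dist_of_ne hxy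
  have hκ := kappaLLY_le hG hxy
  rw [Int.le_floor, Int.cast_natCast, le_div_iff₀ hpos]
  rw [le_div_iff₀ hd] at hκ
  linarith
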